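/- arXiv:2409.00245 — 2 statements merged into one kernel-verified Lean document; each statement's English description precedes it below -/
import Mathlib

section
/- Let G be a graph, X_C ⊆ V(G), and H an X_C-certificate of order z in G. Then H contains a subgraph Ĥ that is also an X_C-certificate of order z in G such that Ĥ − X_C has at most z²·|X_C| connected components. -/
/-!
Fix a 2-colouring `c` of `H - X`. A component `C` of `H - X` attached to `x, y ∈ X` at
vertices `a, b` yields an `x`–`y` path through `C` whose parity is read off from `c a` and
`c b`. For every pair `x, y` and each parity we keep at most `z` such components, and `Ĥ` is
`H` induced on `X` and the kept components. The pairs lie in common components of `H`, so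
`Ĥ - X` has at most `z² |X|` components.

If `S` were an odd cycle transversal of `Ĥ` with `|S| < |X|`, some component `D` of `H` would
have `|S ∩ D| < |X ∩ D| ≤ z`. Cut a closed walk of `H - S` inside `D` at its vertices in `X`.
A segment running through a component that was not kept can be replaced by one of the `z`
kept components with the same attachments and parity, and one of these avoids `S`. So the
parities of all segments are dictated by a 2-colouring of `Ĥ - S`, every such closed walk is
even, and `(S ∩ D) ∪ (X \ D)` would be an odd cycle transversal of `H` smaller than `X`.
-/

open SimpleGraph

/-- `S` is an odd cycle transversal of `G`: removing `S` leaves a bipartite graph. -/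
def IsOCT {W : Type*} (G : SimpleGraph W) (S : Set W) : Prop :=
  (G.induce Sᶜ).Colorable 2

/-- `H` is an `XC`-certificate of order `z` in `G`: a subgraph of `G` such that `XC` is a
minimum-size odd cycle transversal of `H` and every connected component of `H` contains
at most `z` vertices of `XC`. -/
def IsCert {V : Type*} (G : SimpleGraph V) (H : G.Subgraph) (XC : Set V) (z : ℕ) : Prop :=
  XC ⊆ H.verts ∧
  IsOCT H.coe {x : ↥H.verts | (x : V) ∈ XC} ∧
  (∀ S : Set ↥H.verts, IsOCT H.coe S → XC.ncard ≤ S.ncard) ∧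
  ∀ v : ↥H.verts, {u : ↥H.verts | H.coe.Reachable u v ∧ (u : V) ∈ XC}.ncard ≤ z

namespace Set

variable {α ι : Type*}

lemma ncard_biUnion_le_ncard_mul {t : Set ι} (ht : t.Finite) {s : ι → Set α} {n : ℕ}
    (h : ∀ i ∈ t, (s i).ncard ≤ n) : (⋃ i ∈ t, s i).ncard ≤ t.ncard * n := by
  have := ht.toFinset.set_ncard_biUnion_le s
  simp only [Finite.mem_toFinset] at this
  rw [ncard_eq_toFinset_card t ht, ← smul_eq_mul]
  exact this.trans (Finset.sum_le_card_nsmul _ _ _ fun i hi => h i (by simpa using hi))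

lemma exists_ncard_inter_fiber_lt {β : Type*} [Finite α] {s t : Set α} (f : α → β)
    (h : t.ncard < s.ncard) : ∃ b, (t ∩ f ⁻¹' {b}).ncard < (s ∩ f ⁻¹' {b}).ncard := by
  classical
  have := Fintype.ofFinite α
  have hsum (u : Set α) : u.ncard = ∑ b ∈ Finset.univ.image f, (u ∩ f ⁻¹' {b}).ncard := by
    rw [ncard_eq_toFinset_card' u, Finset.card_eq_sum_card_fiberwise
      (fun x _ => Finset.mem_image_of_mem f (Finset.mem_univ x))]
    refine Finset.sum_congr rfl fun b _ => ?_
    rw [ncard_eq_toFinset_card']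
    congr 1
    ext x
    simp
  rw [hsum s, hsum t] at h
  obtain ⟨b, -, hb⟩ := Finset.exists_lt_of_sum_lt h
  exact ⟨b, hb⟩

end Set

namespace SimpleGraph

variable {V : Type*}

lemma Walk.mem_edgeSet_of_forall_adj {Γ Γ' : SimpleGraph V} {u v : V} (p : Γ.Walk u v)
    (h : ∀ a ∈ p.support, ∀ b ∈ p.support, Γ.Adj a b → Γ'.Adj a b) :
    ∀ e ∈ p.edges, e ∈ Γ'.edgeSet := by
  intro e he
  induction e using Sym2.ind with
  | h a b =>
    exact h a (p.fst_mem_support_of_mem_edges he) b (p.snd_mem_support_of_mem_edges he)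
      (p.adj_of_mem_edges he)

lemma Walk.reachable_of_mem_support {Γ : SimpleGraph V} {u v w : V} (p : Γ.Walk u v)
    (hw : w ∈ p.support) : Γ.Reachable u w := by
  obtain ⟨q, -, -⟩ := Walk.mem_support_iff_exists_append.mp hw
  exact q.reachable

lemma Walk.exists_split_at_first_mem {Γ : SimpleGraph V} {s : Set V} {a v : V}
    (p : Γ.Walk a v) (ha : a ∉ s) (hv : v ∈ s) :
    ∃ b y, ∃ (q : Γ.Walk a b) (_ : Γ.Adj b y) (r : Γ.Walk y v), y ∈ s ∧
      (∀ w ∈ q.support, w ∉ s) ∧ p.length = q.length + 1 + r.length := by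
  induction p with
  | nil => exact absurd hv ha
  | @cons a a' v hadj p ih =>
    by_cases ha' : a' ∈ s
    · exact ⟨a, a', .nil, hadj, p, ha', by simpa using ha, by simp; omega⟩
    · obtain ⟨b, y, q, hby, r, hy, hq, hlen⟩ := ih ha' hv
      refine ⟨b, y, .cons hadj q, hby, r, hy, ?_, by simp [hlen]; omega⟩
      simpa [ha] using hq

lemma ConnectedComponent.exists_forall_ne_of_ncard_lt {Γ : SimpleGraph V}
    {𝒞 : Set Γ.ConnectedComponent} {A : Set V} (hA : A.Finite) (h : A.ncard < 𝒞.ncard) :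
    ∃ C ∈ 𝒞, ∀ v ∈ A, Γ.connectedComponentMk v ≠ C := by
  by_contra! hcover
  have : 𝒞 ⊆ Γ.connectedComponentMk '' A := fun C hC => by
    obtain ⟨v, hv, rfl⟩ := hcover C hC
    exact ⟨v, hv, rfl⟩
  exact h.not_ge ((Set.ncard_le_ncard this (hA.image _)).trans (Set.ncard_image_le hA))

lemma ConnectedComponent.card_le_ncard_of_hom {W : Type*} [Finite V] {Λ : SimpleGraph W}
    {Γ : SimpleGraph V} (φ : Λ →g Γ)
    (hφ : ∀ x y, Γ.Reachable (φ x) (φ y) → Λ.Reachable x y)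
    {𝒞 : Set Γ.ConnectedComponent} (h𝒞 : ∀ x, Γ.connectedComponentMk (φ x) ∈ 𝒞) :
    Nat.card Λ.ConnectedComponent ≤ 𝒞.ncard := by
  rw [← Nat.card_coe_set_eq]
  refine Nat.card_le_card_of_injective (fun C => ⟨C.map φ, ?_⟩) fun C D hCD => ?_
  · induction C using ConnectedComponent.ind with
    | h x => exact h𝒞 x
  · induction C using ConnectedComponent.ind with
    | h x =>
      induction D using ConnectedComponent.ind with
      | h y =>
        simp only [ConnectedComponent.map_mk, Subtype.mk.injEq, ConnectedComponent.eq] at hCD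
        exact ConnectedComponent.sound (hφ x y hCD)

namespace Subgraph

variable {G : SimpleGraph V} {K : G.Subgraph}

@[simp]
lemma spanningCoe_deleteVerts_adj {S : Set V} {a b : V} :
    (K.deleteVerts S).spanningCoe.Adj a b ↔ K.Adj a b ∧ a ∉ S ∧ b ∉ S := by
  simp only [spanningCoe_adj, deleteVerts_adj]
  exact ⟨fun h => ⟨h.2.2.2.2, h.2.1, h.2.2.2.1⟩,
    fun h => ⟨K.edge_vert h.1, h.2.1, K.edge_vert h.1.symm, h.2.2, h.1⟩⟩

lemma reachable_of_reachable_deleteVerts {S : Set V} {a b : V}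
    (h : (K.deleteVerts S).spanningCoe.Reachable a b) : K.spanningCoe.Reachable a b :=
  h.mono (spanningCoe_le_of_le deleteVerts_le)

lemma mem_verts_of_reachable {u v : V} (h : K.spanningCoe.Reachable u v) (hu : u ∈ K.verts) :
    v ∈ K.verts := by
  obtain ⟨p⟩ := h.symm
  cases p with
  | nil => exact hu
  | cons hadj _ => exact K.edge_vert hadj

lemma reachable_coe_iff {u v : K.verts} :
    K.coe.Reachable u v ↔ K.spanningCoe.Reachable u v := by
  refine ⟨fun h => h.map ⟨Subtype.val, id⟩, fun ⟨p⟩ => ?_⟩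
  have hp : ∀ w ∈ p.support, w ∈ K.verts := fun w hw =>
    mem_verts_of_reachable (p.reachable_of_mem_support hw) u.2
  exact ((p.induce K.verts hp).map ⟨id, id⟩).reachable

lemma ncard_inter_connectedComponentMk_le {X : Set V} {z : ℕ}
    (hord : ∀ v : K.verts, {u : K.verts | K.coe.Reachable u v ∧ ↑u ∈ X}.ncard ≤ z)
    (hX : X ⊆ K.verts) {x : V} (hx : x ∈ K.verts) :
    (X ∩ K.spanningCoe.connectedComponentMk x).ncard ≤ z := by
  have : X ∩ K.spanningCoe.connectedComponentMk x =
      Subtype.val '' {u : K.verts | K.coe.Reachable u ⟨x, hx⟩ ∧ ↑u ∈ X} := by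
    ext w
    simp only [Set.mem_inter_iff, SetLike.mem_coe, Set.mem_image, Subtype.exists,
      reachable_coe_iff]
    exact ⟨fun h => ⟨w, hX h.1, ⟨ConnectedComponent.eq.mp h.2, h.1⟩, rfl⟩,
      fun ⟨_, _, h, hw⟩ => hw ▸ ⟨h.2, ConnectedComponent.eq.mpr h.1⟩⟩
  rw [this, Set.ncard_image_of_injective _ Subtype.val_injective]
  exact hord _

lemma ncard_reachable_le_of_le [Finite V] {K' : G.Subgraph} (h : K' ≤ K) (X : Set V)
    (v : K'.verts) : {u : K'.verts | K'.coe.Reachable u v ∧ ↑u ∈ X}.ncard ≤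
      {u : K.verts | K.coe.Reachable u (inclusion h v) ∧ ↑u ∈ X}.ncard :=
  Set.ncard_le_ncard_of_injOn (inclusion h) (fun _ hu => ⟨hu.1.map (inclusion h), hu.2⟩)
    (inclusion.injective h).injOn

lemma isOCT_coe_iff (K : G.Subgraph) (S : Set V) :
    IsOCT K.coe {x | ↑x ∈ S} ↔ (K.deleteVerts S).spanningCoe.Colorable 2 := by
  let e : ↥{x : K.verts | ↑x ∈ S}ᶜ → V := fun x => x.1.1
  have he : e.Injective := fun x y h => Subtype.ext (Subtype.ext h)
  refine ⟨fun ⟨C⟩ => ⟨Coloring.mk (Function.extend e C fun _ => 0) ?_⟩, fun h => ?_⟩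
  · intro a b hab
    obtain ⟨hab, ha, hb⟩ := spanningCoe_deleteVerts_adj.mp hab
    let a' : ↥{x : K.verts | ↑x ∈ S}ᶜ := ⟨⟨a, K.edge_vert hab⟩, ha⟩
    let b' : ↥{x : K.verts | ↑x ∈ S}ᶜ := ⟨⟨b, K.edge_vert hab.symm⟩, hb⟩
    rw [show a = e a' from rfl, show b = e b' from rfl, he.extend_apply, he.extend_apply]
    exact C.valid (show K.Adj a b from hab)
  · exact h.of_hom ⟨e, fun {x y} hxy => spanningCoe_deleteVerts_adj.mpr ⟨hxy, x.2, y.2⟩⟩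

lemma colorable_deleteVerts_inter_union_sdiff {X T : Set V}
    (D : K.spanningCoe.ConnectedComponent) (hX : (K.deleteVerts X).spanningCoe.Colorable 2)
    (hT : ∀ u ∈ D, ∀ p : (K.deleteVerts T).spanningCoe.Walk u u, Even p.length) :
    (K.deleteVerts (T ∩ D ∪ X \ D)).spanningCoe.Colorable 2 := by
  refine two_colorable_iff_forall_loop_even.mpr fun u p => ?_
  have hsupp : ∀ w ∈ p.support, w ∈ D ↔ u ∈ D := fun w hw => by
    have : K.spanningCoe.connectedComponentMk w = K.spanningCoe.connectedComponentMk u :=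
      ConnectedComponent.sound
        (reachable_of_reachable_deleteVerts (p.reachable_of_mem_support hw)).symm
    change _ = D ↔ _ = D
    rw [this]
  by_cases hu : u ∈ D
  · rw [← p.length_transfer (p.mem_edgeSet_of_forall_adj fun a ha b hb hab => ?_)]
    · exact hT u hu _
    simp only [spanningCoe_deleteVerts_adj, Set.mem_union, Set.mem_inter_iff, Set.mem_sdiff,
      not_or, not_and, not_not] at hab ⊢
    exact ⟨hab.1, fun h => hab.2.1.1 h ((hsupp a ha).2 hu),
      fun h => hab.2.2.1 h ((hsupp b hb).2 hu)⟩
  · rw [← p.length_transfer (p.mem_edgeSet_of_forall_adj fun a ha b hb hab => ?_)]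
    · exact two_colorable_iff_forall_loop_even.mp hX u _
    simp only [spanningCoe_deleteVerts_adj, Set.mem_union, Set.mem_inter_iff, Set.mem_sdiff,
      not_or, not_and, not_not] at hab ⊢
    exact ⟨hab.1, fun h => hu ((hsupp a ha).1 (hab.2.1.2 h)),
      fun h => hu ((hsupp b hb).1 (hab.2.2.2 h))⟩

end Subgraph

end SimpleGraph

namespace OCT

open Subgraph

variable {V : Type*} {G : SimpleGraph V} {H : G.Subgraph} {X : Set V}

def Joins (c : (H.deleteVerts X).spanningCoe.Coloring Bool)
    (C : (H.deleteVerts X).spanningCoe.ConnectedComponent) (x y : V) (even : Prop) : Prop :=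
  ∃ a ∈ C, ∃ b ∈ C, a ∉ X ∧ b ∉ X ∧ H.Adj x a ∧ H.Adj y b ∧ (c a = c b ↔ even)

section Joins

variable {c : (H.deleteVerts X).spanningCoe.Coloring Bool}
  {C : (H.deleteVerts X).spanningCoe.ConnectedComponent} {x y v : V} {P : Prop}

lemma Joins.mem_verts_sdiff (hC : Joins c C x y P) (hv : v ∈ C) : v ∈ H.verts \ X := by
  obtain ⟨a, rfl, -, -, ha, -, hxa, -⟩ := hC
  exact mem_verts_of_reachable (ConnectedComponent.exact hv).symm ⟨H.edge_vert hxa.symm, ha⟩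

lemma Joins.reachable (hC : Joins c C x y P) (hv : v ∈ C) :
    H.spanningCoe.Reachable x v ∧ H.spanningCoe.Reachable x y := by
  obtain ⟨a, rfl, b, hb, -, -, hxa, hyb, -⟩ := hC
  have hxa : H.spanningCoe.Reachable x a := (show H.spanningCoe.Adj x a from hxa).reachable
  exact ⟨hxa.trans (reachable_of_reachable_deleteVerts (ConnectedComponent.exact hv).symm),
    (hxa.trans (reachable_of_reachable_deleteVerts (ConnectedComponent.exact hb).symm)).trans
      (show H.spanningCoe.Adj y b from hyb).reachable.symm⟩

end Joins

variable [LinearOrder V] (c : (H.deleteVerts X).spanningCoe.Coloring Bool) (z : ℕ)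

/-- An unordered pair `{x, y}` with a parity is encoded by the ordered pair `(x, y)` with
"even iff `y < x`"; the only combination left out, `x = y` with even parity, never matters. -/
def joining (x y : V) : Set (H.deleteVerts X).spanningCoe.ConnectedComponent :=
  {C | Joins c C x y (y < x)}

def selected (x y : V) : Set (H.deleteVerts X).spanningCoe.ConnectedComponent :=
  (Set.exists_subset_card_eq (min_le_right z (joining c x y).ncard)).choose

def keptVerts : Set V :=
  X ∪ {v | ∃ x ∈ X, ∃ y ∈ X,
    (H.deleteVerts X).spanningCoe.connectedComponentMk v ∈ selected c z x y}

def trim : G.Subgraph :=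
  H.induce (keptVerts c z)

variable {c z}

lemma selected_subset {x y : V} : selected c z x y ⊆ joining c x y :=
  (Set.exists_subset_card_eq (min_le_right z (joining c x y).ncard)).choose_spec.1

lemma ncard_selected {x y : V} : (selected c z x y).ncard = min z (joining c x y).ncard :=
  (Set.exists_subset_card_eq (min_le_right z (joining c x y).ncard)).choose_spec.2

lemma ncard_selected_le {x y : V} : (selected c z x y).ncard ≤ z :=
  ncard_selected.trans_le (min_le_left _ _)

lemma keptVerts_subset (hX : X ⊆ H.verts) : keptVerts c z ⊆ H.verts := by
  rintro v (hv | ⟨x, -, y, -, hv⟩)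
  · exact hX hv
  · exact (Joins.mem_verts_sdiff (selected_subset hv) rfl).1

lemma trim_le (hX : X ⊆ H.verts) : trim c z ≤ H :=
  (induce_mono_right (keptVerts_subset hX)).trans_eq induce_self_verts

lemma spanningCoe_deleteVerts_trim_adj {T : Set V} {a b : V} :
    ((trim c z).deleteVerts T).spanningCoe.Adj a b ↔
      H.Adj a b ∧ a ∈ keptVerts c z ∧ b ∈ keptVerts c z ∧ a ∉ T ∧ b ∉ T := by
  simp only [spanningCoe_deleteVerts_adj, trim, Subgraph.induce_adj]
  tauto

lemma mem_selected_of_mem_trim_deleteVerts {v : V}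
    (hv : v ∈ ((trim c z).deleteVerts X).verts) : ∃ x ∈ X, ∃ y ∈ X,
      (H.deleteVerts X).spanningCoe.connectedComponentMk v ∈ selected c z x y :=
  hv.1.resolve_left hv.2

lemma mem_trim_deleteVerts_of_reachable {u w : V}
    (h : (H.deleteVerts X).spanningCoe.Reachable u w)
    (hu : u ∈ ((trim c z).deleteVerts X).verts) : w ∈ ((trim c z).deleteVerts X).verts := by
  obtain ⟨x, hx, y, hy, hu⟩ := mem_selected_of_mem_trim_deleteVerts hu
  rw [ConnectedComponent.sound h] at hu
  exact ⟨Or.inr ⟨x, hx, y, hy, hu⟩, (Joins.mem_verts_sdiff (selected_subset hu) rfl).2⟩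

lemma card_connectedComponent_le_ncard_selected [Finite V] :
    Nat.card ((trim c z).deleteVerts X).coe.ConnectedComponent ≤
      (⋃ x ∈ X, ⋃ y ∈ X, selected c z x y).ncard := by
  let φ : ((trim c z).deleteVerts X).coe →g (H.deleteVerts X).spanningCoe :=
    ⟨Subtype.val, fun {v w} hvw => spanningCoe_deleteVerts_adj.mpr
      ⟨(spanningCoe_deleteVerts_trim_adj.mp hvw).1, v.2.2, w.2.2⟩⟩
  let ψ : (H.deleteVerts X).spanningCoe.induce ((trim c z).deleteVerts X).verts →g
      ((trim c z).deleteVerts X).coe :=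
    ⟨id, fun {v w} hvw => spanningCoe_deleteVerts_trim_adj.mpr
      ⟨(spanningCoe_deleteVerts_adj.mp hvw).1, v.2.1, w.2.1, v.2.2, w.2.2⟩⟩
  refine ConnectedComponent.card_le_ncard_of_hom φ (fun v w ⟨p⟩ => ?_) fun v => ?_
  · exact ((p.induce _ fun u hu => mem_trim_deleteVerts_of_reachable
      (p.reachable_of_mem_support hu) v.2).map ψ).reachable
  · obtain ⟨x, hx, y, hy, hv⟩ := mem_selected_of_mem_trim_deleteVerts v.2
    exact Set.mem_biUnion hx (Set.mem_biUnion hy hv)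

lemma ncard_biUnion_selected_le [Finite V]
    (hz : ∀ x ∈ X, (X ∩ H.spanningCoe.connectedComponentMk x).ncard ≤ z) :
    (⋃ x ∈ X, ⋃ y ∈ X, selected c z x y).ncard ≤ z ^ 2 * X.ncard := by
  have hinner : ∀ x ∈ X, (⋃ y ∈ X, selected c z x y).ncard ≤ z * z := fun x hx => by
    have hsub : ⋃ y ∈ X, selected c z x y ⊆
        ⋃ y ∈ X ∩ H.spanningCoe.connectedComponentMk x, selected c z x y := by
      simp only [Set.iUnion_subset_iff]
      intro y hy C hC
      have hxy := (Joins.reachable (selected_subset hC) C.exists_rep.choose_spec).2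
      exact Set.mem_biUnion ⟨hy, (ConnectedComponent.sound hxy).symm⟩ hC
    exact (Set.ncard_le_ncard hsub).trans <| (Set.ncard_biUnion_le_ncard_mul (Set.toFinite _)
      fun y _ => ncard_selected_le).trans (Nat.mul_le_mul_right z (hz x hx))
  calc (⋃ x ∈ X, ⋃ y ∈ X, selected c z x y).ncard ≤ X.ncard * (z * z) :=
        Set.ncard_biUnion_le_ncard_mul (Set.toFinite X) hinner
    _ = z ^ 2 * X.ncard := by ring

section Minimality

variable {T : Set V} (f : ((trim c z).deleteVerts T).spanningCoe.Coloring Bool)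

lemma coloring_eq_iff_of_walk {u y a b : V} (hu : u ∈ X) (hy : y ∈ X) (huT : u ∉ T)
    (hyT : y ∉ T) (hua : H.Adj u a) (hyb : H.Adj y b)
    (q : (H.deleteVerts X).spanningCoe.Walk a b)
    (hq : ∀ w ∈ q.support, w ∈ keptVerts c z ∧ w ∉ T) : c a = c b ↔ f u = f y := by
  have hqM := q.mem_edgeSet_of_forall_adj (Γ' := ((trim c z).deleteVerts T).spanningCoe)
    fun v hv w hw hvw => spanningCoe_deleteVerts_trim_adj.mpr
      ⟨(spanningCoe_deleteVerts_adj.mp hvw).1, (hq v hv).1, (hq w hw).1, (hq v hv).2,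
        (hq w hw).2⟩
  have ha := hq a q.start_mem_support
  have hb := hq b q.end_mem_support
  have hm := f.even_length_iff_congr <| ((q.transfer _ hqM).cons
    (spanningCoe_deleteVerts_trim_adj.mpr ⟨hua, Or.inl hu, ha.1, huT, ha.2⟩)).concat
    (spanningCoe_deleteVerts_trim_adj.mpr ⟨hyb.symm, hb.1, Or.inl hy, hb.2, hyT⟩)
  simp only [Walk.length_concat, Walk.length_cons, Walk.length_transfer, Nat.even_add_one,
    not_not] at hm
  rw [← Bool.coe_iff_coe (a := f u), ← hm, c.even_length_iff_congr q, Bool.coe_iff_coe]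

lemma coloring_eq_iff_of_notMem_selected [Finite V] {x y : V} (hx : x ∈ X) (hy : y ∈ X)
    (hxT : x ∉ T) (hyT : y ∉ T) {C : (H.deleteVerts X).spanningCoe.ConnectedComponent}
    (hC : C ∈ joining c x y) (hCs : C ∉ selected c z x y)
    (hTz : (T ∩ H.spanningCoe.connectedComponentMk x).ncard < z) : f x = f y ↔ y < x := by
  have hfull : (selected c z x y).ncard = z := by
    rw [ncard_selected, min_eq_left]
    by_contra! hlt
    refine hCs ((Set.eq_of_subset_of_ncard_le (t := joining c x y) selected_subset ?_
      (Set.toFinite _)) ▸ hC)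
    rw [ncard_selected, min_eq_right hlt.le]
  obtain ⟨C', hC', hfree⟩ :=
    ConnectedComponent.exists_forall_ne_of_ncard_lt (Set.toFinite _) (hfull ▸ hTz)
  obtain ⟨a, haC, b, hbC, -, -, hxa, hyb, hpar⟩ := selected_subset hC'
  obtain ⟨q⟩ := ConnectedComponent.exact (haC.trans hbC.symm)
  rw [← hpar]
  refine (coloring_eq_iff_of_walk f hx hy hxT hyT hxa hyb q fun w hw => ?_).symm
  have hwC : (H.deleteVerts X).spanningCoe.connectedComponentMk w = C' :=
    (ConnectedComponent.sound (q.reachable_of_mem_support hw)).symm.trans haC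
  refine ⟨Or.inr ⟨x, hx, y, hy, hwC ▸ hC'⟩, fun hwT => hfree w ⟨hwT, ?_⟩ hwC⟩
  exact (ConnectedComponent.sound (Joins.reachable (selected_subset hC') hwC).1).symm

lemma coloring_eq_iff_of_segment [Finite V] {u y a b : V} (hu : u ∈ X) (hy : y ∈ X)
    (huT : u ∉ T) (hyT : y ∉ T) (hua : H.Adj u a) (hyb : H.Adj y b) (ha : a ∉ X)
    (q : (H.deleteVerts X).spanningCoe.Walk a b) (hqT : ∀ w ∈ q.support, w ∉ T)
    (hTz : (T ∩ H.spanningCoe.connectedComponentMk u).ncard < z) : c a = c b ↔ f u = f y := by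
  have hqa : ∀ w ∈ q.support, (H.deleteVerts X).spanningCoe.connectedComponentMk w =
      (H.deleteVerts X).spanningCoe.connectedComponentMk a := fun w hw =>
    (ConnectedComponent.sound (q.reachable_of_mem_support hw)).symm
  by_cases hkept : ∃ x ∈ X, ∃ y ∈ X,
      (H.deleteVerts X).spanningCoe.connectedComponentMk a ∈ selected c z x y
  · refine coloring_eq_iff_of_walk f hu hy huT hyT hua hyb q fun w hw => ⟨Or.inr ?_, hqT w hw⟩
    rwa [← hqa w hw] at hkept
  push Not at hkept
  have hb : b ∉ X := (mem_verts_of_reachable q.reachable ⟨H.edge_vert hua.symm, ha⟩).2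
  have hba := hqa b q.end_mem_support
  have hyu : H.spanningCoe.connectedComponentMk y = H.spanningCoe.connectedComponentMk u :=
    (ConnectedComponent.sound (Joins.reachable (c := c) (P := c a = c b)
      ⟨a, rfl, b, hba, ha, hb, hua, hyb, Iff.rfl⟩ rfl).2).symm
  by_cases hor : c a = c b ↔ y < u
  · rw [hor, coloring_eq_iff_of_notMem_selected f hu hy huT hyT
      ⟨a, rfl, b, hba, ha, hb, hua, hyb, hor⟩ (hkept u hu y hy) hTz]
  rcases eq_or_ne u y with rfl | hne
  · simp only [lt_self_iff_false, iff_false, not_not] at hor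
    simp [hor]
  have hor' : c a = c b ↔ u < y := by
    have : u < y ↔ ¬y < u := ⟨fun h => h.not_gt, fun h => (not_lt.mp h).lt_of_ne hne⟩
    tauto
  rw [hor', eq_comm (a := f u), coloring_eq_iff_of_notMem_selected f hy hu hyT huT
    ⟨b, hba, a, rfl, hb, ha, hyb, hua, eq_comm.trans hor'⟩ (hkept y hy u hu) (hyu ▸ hTz)]

lemma even_length_iff_coloring_eq [Finite V] (D : H.spanningCoe.ConnectedComponent)
    (hTz : (T ∩ D).ncard < z) {u v : V} (hu : u ∈ X) (huD : u ∈ D) (hv : v ∈ X)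
    (p : (H.deleteVerts T).spanningCoe.Walk u v) : Even p.length ↔ f u = f v := by
  match p with
  | .nil => simp
  | .cons (v := a) hua p =>
    obtain ⟨hua, huT, haT⟩ := spanningCoe_deleteVerts_adj.mp hua
    have haD : a ∈ D :=
      (ConnectedComponent.sound (show H.spanningCoe.Adj u a from hua).reachable).symm.trans huD
    by_cases ha : a ∈ X
    · have hfua : f u ≠ f a := f.valid (spanningCoe_deleteVerts_trim_adj.mpr
        ⟨hua, Or.inl hu, Or.inl ha, huT, haT⟩)
      rw [Walk.length_cons, Nat.even_add_one, even_length_iff_coloring_eq D hTz ha haD hv p]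
      revert hfua
      cases f u <;> cases f a <;> cases f v <;> simp
    obtain ⟨b, y, q, hby, r, hy, hqX, hlen⟩ := p.exists_split_at_first_mem ha hv
    obtain ⟨hby', -, hyT⟩ := spanningCoe_deleteVerts_adj.mp hby
    have hqT : ∀ w ∈ q.support, w ∉ T := fun w hw =>
      (mem_verts_of_reachable (q.reachable_of_mem_support hw) ⟨H.edge_vert hua.symm, haT⟩).2
    let qX := q.transfer (H.deleteVerts X).spanningCoe <| q.mem_edgeSet_of_forall_adj
      fun v hv w hw hvw => spanningCoe_deleteVerts_adj.mpr
        ⟨(spanningCoe_deleteVerts_adj.mp hvw).1, hqX v hv, hqX w hw⟩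
    have hyD : y ∈ D := (ConnectedComponent.sound
      (reachable_of_reachable_deleteVerts (q.concat hby).reachable)).symm.trans haD
    have hTu : (T ∩ H.spanningCoe.connectedComponentMk u).ncard < z := by
      rwa [show H.spanningCoe.connectedComponentMk u = D from huD]
    have hq := c.even_length_iff_congr qX
    rw [Walk.length_transfer, Bool.coe_iff_coe, coloring_eq_iff_of_segment f hu hy huT hyT hua
      hby'.symm ha qX (by simpa [qX, Walk.support_transfer] using hqT) hTu] at hq
    have hpar : Even (p.length + 1) ↔ (Even q.length ↔ Even r.length) := by
      rw [hlen, show q.length + 1 + r.length + 1 = q.length + r.length + 2 by ring,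
        Nat.even_add, Nat.even_add]
      simp
    rw [Walk.length_cons, hpar, hq, even_length_iff_coloring_eq D hTz hy hyD hv r]
    cases f u <;> cases f y <;> cases f v <;> simp
termination_by p.length
decreasing_by all_goals simp only [Walk.length_cons]; omega

end Minimality

lemma even_length_of_loop [Finite V] {T : Set V}
    (f : ((trim c z).deleteVerts T).spanningCoe.Coloring Bool)
    (D : H.spanningCoe.ConnectedComponent) (hTz : (T ∩ D).ncard < z) {u : V} (huD : u ∈ D)
    (p : (H.deleteVerts T).spanningCoe.Walk u u) : Even p.length := by
  by_cases hX : ∃ x ∈ p.support, x ∈ X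
  · obtain ⟨x, hxp, hx⟩ := hX
    have hxD : x ∈ D := (ConnectedComponent.sound (reachable_of_reachable_deleteVerts
      (p.reachable_of_mem_support hxp))).symm.trans huD
    rw [← p.length_rotate x hxp]
    exact (even_length_iff_coloring_eq f D hTz hx hxD hx _).mpr rfl
  push Not at hX
  rw [← p.length_transfer (p.mem_edgeSet_of_forall_adj (Γ' := (H.deleteVerts X).spanningCoe)
    fun a ha b hb hab => spanningCoe_deleteVerts_adj.mpr
      ⟨(spanningCoe_deleteVerts_adj.mp hab).1, hX a ha, hX b hb⟩)]
  exact (c.even_length_iff_congr _).mpr Iff.rfl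

theorem ncard_le_of_colorable_trim [Finite V] {T : Set V} (hX : X ⊆ H.verts)
    (hmin : ∀ S ⊆ H.verts, (H.deleteVerts S).spanningCoe.Colorable 2 → X.ncard ≤ S.ncard)
    (hz : ∀ x ∈ X, (X ∩ H.spanningCoe.connectedComponentMk x).ncard ≤ z)
    (hT : T ⊆ H.verts) (hcol : ((trim c z).deleteVerts T).spanningCoe.Colorable 2) :
    X.ncard ≤ T.ncard := by
  obtain ⟨f⟩ : Nonempty (((trim c z).deleteVerts T).spanningCoe.Coloring Bool) :=
    ⟨recolorOfEquiv _ finTwoEquiv hcol.some⟩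
  by_contra! hlt
  obtain ⟨D, hD⟩ := Set.exists_ncard_inter_fiber_lt H.spanningCoe.connectedComponentMk hlt
  change (T ∩ D).ncard < (X ∩ D).ncard at hD
  obtain ⟨x, hxX, hxD⟩ := Set.nonempty_of_ncard_ne_zero (by omega : (X ∩ D).ncard ≠ 0)
  have hTz : (T ∩ D).ncard < z := by
    rw [← show H.spanningCoe.connectedComponentMk x = D from hxD] at hD ⊢
    exact hD.trans_le (hz x hxX)
  have hcolS := colorable_deleteVerts_inter_union_sdiff D
    ⟨(recolorOfEquiv _ finTwoEquiv).symm c⟩ fun u hu p => even_length_of_loop f D hTz hu p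
  have := hmin _ (Set.union_subset (Set.inter_subset_left.trans hT) (Set.sdiff_subset.trans hX))
    hcolS
  have := Set.ncard_union_le (T ∩ D) (X \ D)
  have := Set.ncard_inter_add_ncard_sdiff_eq_ncard X D
  omega

variable [Finite V]

theorem isCert_trim (hH : IsCert G H X z) : IsCert G (trim c z) X z := by
  obtain ⟨hX, -, hmin, hord⟩ := hH
  refine ⟨Set.subset_union_left, (isOCT_coe_iff _ X).mpr ?_, fun S hS => ?_,
    fun v => (ncard_reachable_le_of_le (trim_le hX) X v).trans (hord _)⟩
  · exact Colorable.mono_left (spanningCoe_le_of_le (deleteVerts_mono (trim_le hX)))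
      ⟨(recolorOfEquiv _ finTwoEquiv).symm c⟩
  rw [← Set.preimage_image_eq S Subtype.val_injective] at hS
  rw [← Set.ncard_image_of_injective S Subtype.val_injective]
  refine ncard_le_of_colorable_trim hX (fun S' hS' hcol => ?_)
    (fun x hx => ncard_inter_connectedComponentMk_le hord hX (hX hx))
    (fun _ ⟨v, _, hv⟩ => hv ▸ keptVerts_subset hX v.2) ((isOCT_coe_iff _ _).mp hS)
  exact (hmin _ ((isOCT_coe_iff H S').mpr hcol)).trans_eq
    (Set.ncard_preimage_of_injective_subset_range Subtype.val_injective (by simpa using hS'))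

theorem card_connectedComponent_trim_le (hH : IsCert G H X z) :
    Nat.card ((trim c z).deleteVerts X).coe.ConnectedComponent ≤ z ^ 2 * X.ncard :=
  card_connectedComponent_le_ncard_selected.trans <| ncard_biUnion_selected_le
    fun _ hx => ncard_inter_connectedComponentMk_le hH.2.2.2 hH.1 (hH.1 hx)

end OCT

/-- Every `XC`-certificate `H` of order `z` contains an `XC`-certificate `Ĥ` of order `z`
such that `Ĥ − XC` has at most `z² · |XC|` connected components. -/
theorem certificate_few_components {V : Type} [Fintype V] (G : SimpleGraph V)
    (H : G.Subgraph) (XC : Set V) (z : ℕ) (hH : IsCert G H XC z) :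
    ∃ H' : G.Subgraph, H' ≤ H ∧ IsCert G H' XC z ∧
      Nat.card ((H'.deleteVerts XC).coe.ConnectedComponent) ≤ z ^ 2 * XC.ncard := by
  let : LinearOrder V := LinearOrder.lift' _ (Fintype.equivFin V).injective
  obtain ⟨c⟩ : Nonempty ((H.deleteVerts XC).spanningCoe.Coloring Bool) :=
    ⟨recolorOfEquiv _ finTwoEquiv ((Subgraph.isOCT_coe_iff H XC).mp hH.2.1).some⟩
  exact ⟨OCT.trim c z, OCT.trim_le hH.1, OCT.isCert_trim hH,
    OCT.card_connectedComponent_trim_le hH⟩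
end

section
/- In the reduction from Multicolored Clique constructed as follows: for each vertex i of G introduce a clique U = ∪_i U_i where U_i = {u_{iℓ} : ℓ ∈ [k] \ {χ(i)}}, and for each edge ij of G add vertices x_{ij}, x'_{ij}, y_{ij}, y'_{ij} with edges from U_i ∪ U_j to x_{ij} and to y_{ij}, edges x_{ij}x'_{ij}, y_{ij}y'_{ij}, x'_{ij}u_{iχ(j)}, y'_{ij}u_{jχ(i)} — if G has a multicolored clique S of size k, then setting X_B = ∪_{i,j ∈ S, i≠j} {x_{ij}, x'_{ij}, y_{ij}, y'_{ij}}, X_C = ∪_{i∈S} U_i, and X_R the remaining vertices yields a 1-tight odd cycle cut of width k(k−1) in the constructed graph G'. -/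
/-!
The gadget vertices `X_B` are properly 2-coloured by their last coordinate (`x, y` against
`x', y'`), and every neighbour of `X_B` lies in `X_B ∪ X_C`; so the partition is an odd cycle
cut and `X_C` is an odd cycle transversal of `G'[X_B ∪ X_C]`. Conversely, for `u_{aℓ} ∈ X_C` let
`b ∈ S` be the clique vertex of colour `ℓ`: then `u_{aℓ} x_{ab} x'_{ab}` is a triangle, and these
`k(k-1)` triangles are pairwise vertex-disjoint, so no odd cycle transversal is smaller than
`X_C`. The triangles themselves form the certificate, each containing one vertex of `X_C`.
-/

open SimpleGraph

/-- The minimum size of an odd cycle transversal of `G`. -/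
noncomputable def oct {W : Type*} (G : SimpleGraph W) : ℕ :=
  sInf {n | ∃ S : Set W, S.ncard = n ∧ IsOCT G S}

/-- `(XB, XC, XR)` is an odd cycle cut of `G`. -/
def IsOCC {V : Type*} (G : SimpleGraph V) (XB XC XR : Set V) : Prop :=
  XB ∪ XC ∪ XR = Set.univ ∧ Disjoint XB XC ∧ Disjoint XB XR ∧ Disjoint XC XR ∧
  (G.induce XB).Colorable 2 ∧
  (∀ u ∈ XB, ∀ v ∈ XR, ¬ G.Adj u v) ∧
  (XB ∪ XC).Nonempty

/-- `(AB, AC, AR)` is a `z`-tight odd cycle cut of `G`: a tight OCC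
(`|AC| = oct(G[AC ∪ AB])`) such that `G[AC ∪ AB]` contains an `AC`-certificate of
order `z`. -/
def IsZTightOCC {V : Type*} (G : SimpleGraph V) (AB AC AR : Set V) (z : ℕ) : Prop :=
  IsOCC G AB AC AR ∧ AC.ncard = oct (G.induce (AC ∪ AB)) ∧
  ∃ H : G.Subgraph, H.verts ⊆ AC ∪ AB ∧ IsCert G H AC z


/-- The symmetrized adjacency relation of the graph `G'` built in the reduction from
Multicolored Clique: vertices `Sum.inl (i, ℓ)` are the clique vertices `u_{iℓ}`
(valid when `ℓ ≠ χ i`), and vertices `Sum.inr (a, b, 0)`, `Sum.inr (a, b, 1)` are the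
gadget vertices `x_{ab}`, `x'_{ab}` for the oriented edge `(a, b)` (so `(b, a, 0/1)`
are `y_{ab}`, `y'_{ab}`).  All `u`-vertices form a clique; for each edge `ab` of `G`,
`x_{ab}` is adjacent to `U_a ∪ U_b`, to `x'_{ab}`, and `x'_{ab}` is adjacent to
`u_{a χ(b)}`. -/
def gadgetRel {V : Type} {k : ℕ} (G : SimpleGraph V) (χ : V → Fin k) :
    ((V × Fin k) ⊕ (V × V × Fin 2)) → ((V × Fin k) ⊕ (V × V × Fin 2)) → Prop :=
  fun x y =>
    match x, y with
    | Sum.inl (i, ℓ), Sum.inl (i', ℓ') => ℓ ≠ χ i ∧ ℓ' ≠ χ i'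
    | Sum.inl (i, ℓ), Sum.inr (a, b, c) => ℓ ≠ χ i ∧ G.Adj a b ∧
        ((c = 0 ∧ (i = a ∨ i = b)) ∨ (c = 1 ∧ i = a ∧ ℓ = χ b))
    | Sum.inr (a, b, _), Sum.inr (a', b', _) => G.Adj a b ∧ a = a' ∧ b = b'
    | _, _ => False

section OddCycleTransversal

variable {W : Type*} {H K : SimpleGraph W} {S : Set W}

lemma IsOCT.mono (hle : H ≤ K) (hS : IsOCT K S) : IsOCT H S :=
  Colorable.mono_left (G' := K.induce Sᶜ) (fun _ _ h => hle h) hS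

lemma IsOCT.mem_of_triangle (hS : IsOCT H S) {x y z : W}
    (hxy : H.Adj x y) (hxz : H.Adj x z) (hyz : H.Adj y z) : x ∈ S ∨ y ∈ S ∨ z ∈ S := by
  classical
  by_contra! h
  obtain ⟨hx, hy, hz⟩ := h
  refine (Colorable.cliqueFree hS (by norm_num : 2 < 3)) {⟨x, hx⟩, ⟨y, hy⟩, ⟨z, hz⟩} ?_
  exact is3Clique_triple_iff.mpr ⟨hxy, hxz, hyz⟩

lemma IsOCT.ncard_le_of_triangles [Finite W] {ι : Type*} {π : W → ι} {C : Set W}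
    (hπ : ∀ ⦃x y⦄, H.Adj x y → π x = π y) (hinj : C.InjOn π)
    (htri : ∀ x ∈ C, ∃ y z, H.Adj x y ∧ H.Adj x z ∧ H.Adj y z) (hS : IsOCT H S) :
    C.ncard ≤ S.ncard := by
  have hcover : π '' C ⊆ π '' S := by
    rintro _ ⟨x, hx, rfl⟩
    obtain ⟨y, z, hxy, hxz, hyz⟩ := htri x hx
    rcases hS.mem_of_triangle hxy hxz hyz with h | h | h
    · exact ⟨x, h, rfl⟩
    · exact ⟨y, h, (hπ hxy).symm⟩
    · exact ⟨z, h, (hπ hxz).symm⟩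
  calc C.ncard = (π '' C).ncard := hinj.ncard_image.symm
    _ ≤ (π '' S).ncard := Set.ncard_le_ncard hcover
    _ ≤ S.ncard := Set.ncard_image_le

lemma oct_eq_ncard (hS : IsOCT H S) (hmin : ∀ T, IsOCT H T → S.ncard ≤ T.ncard) :
    oct H = S.ncard :=
  le_antisymm (Nat.sInf_le ⟨S, rfl, hS⟩) <| le_csInf ⟨_, S, rfl, hS⟩ <| by
    rintro n ⟨T, rfl, hT⟩
    exact hmin T hT

end OddCycleTransversal

namespace SimpleGraph

variable {W ι : Type*}

def fiberSubgraph (G : SimpleGraph W) (s : Set W) (π : W → ι) : G.Subgraph where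
  verts := s
  Adj x y := G.Adj x y ∧ x ∈ s ∧ y ∈ s ∧ π x = π y
  adj_sub h := h.1
  edge_vert h := h.2.1
  symm := ⟨fun _ _ h => ⟨h.1.symm, h.2.2.1, h.2.1, h.2.2.2.symm⟩⟩

variable {G : SimpleGraph W} {s : Set W} {π : W → ι}

lemma fiberSubgraph_coe_le_induce :
    (G.fiberSubgraph s π).coe ≤ (G.induce s : SimpleGraph (G.fiberSubgraph s π).verts) :=
  fun _ _ h => h.1

lemma fiberSubgraph_coe_adj_fiber {x y : (G.fiberSubgraph s π).verts}
    (h : (G.fiberSubgraph s π).coe.Adj x y) : π x = π y :=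
  h.2.2.2

lemma fiberSubgraph_reachable_fiber {x y : (G.fiberSubgraph s π).verts}
    (h : (G.fiberSubgraph s π).coe.Reachable x y) : π x = π y := by
  obtain ⟨p⟩ := h
  induction p with
  | nil => rfl
  | cons hadj _ ih => exact (fiberSubgraph_coe_adj_fiber hadj).trans ih

end SimpleGraph

section Gadget

variable {V : Type} {k : ℕ} {G : SimpleGraph V} {χ : V → Fin k}

/-- Vertices `u_{aℓ}` and those of the gadget of the oriented edge `(a, b)` with `χ b = ℓ` share
the label `(a, ℓ)`; each such fibre carries the triangle `u_{aℓ} x_{ab} x'_{ab}`. -/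
def gadgetFiber (χ : V → Fin k) : (V × Fin k) ⊕ (V × V × Fin 2) → V × Fin k
  | Sum.inl p => p
  | Sum.inr (a, b, _) => (a, χ b)

lemma parity_ne_of_adj_inr_inr {s t : V × V × Fin 2}
    (h : (fromRel (gadgetRel G χ)).Adj (Sum.inr s) (Sum.inr t)) : s.2.2 ≠ t.2.2 := by
  obtain ⟨a, b, c⟩ := s
  obtain ⟨a', b', c'⟩ := t
  obtain ⟨hne, ⟨-, rfl, rfl⟩ | ⟨-, rfl, rfl⟩⟩ := (fromRel_adj _ _ _).mp h <;>
  · rintro rfl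
    exact hne rfl

lemma colorable_of_hom_gadgetRel {ι : Type*} {K : SimpleGraph ι}
    (φ : K →g fromRel (gadgetRel G χ)) (hφ : ∀ i, ∃ t, φ i = Sum.inr t) : K.Colorable 2 := by
  choose t ht using hφ
  refine ⟨Coloring.mk (fun i => (t i).2.2) fun {i j} hij => ?_⟩
  have h := φ.map_adj hij
  rw [ht i, ht j] at h
  exact parity_ne_of_adj_inr_inr h

lemma gadgetRel_triangle {a b : V} {ℓ : Fin k} (hab : G.Adj a b) (hℓ : ℓ ≠ χ a)
    (hb : χ b = ℓ) :
    (fromRel (gadgetRel G χ)).Adj (Sum.inl (a, ℓ)) (Sum.inr (a, b, 0)) ∧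
    (fromRel (gadgetRel G χ)).Adj (Sum.inl (a, ℓ)) (Sum.inr (a, b, 1)) ∧
    (fromRel (gadgetRel G χ)).Adj (Sum.inr (a, b, 0)) (Sum.inr (a, b, 1)) :=
  ⟨(fromRel_adj _ _ _).mpr ⟨by simp, Or.inl ⟨hℓ, hab, Or.inl ⟨rfl, Or.inl rfl⟩⟩⟩,
    (fromRel_adj _ _ _).mpr ⟨by simp, Or.inl ⟨hℓ, hab, Or.inr ⟨rfl, rfl, hb.symm⟩⟩⟩,
    (fromRel_adj _ _ _).mpr ⟨by simp, Or.inl ⟨hab, rfl, rfl⟩⟩⟩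

variable (G) in
/-- The set `X_B`. -/
def gadgetVerts (S : Set V) : Set ((V × Fin k) ⊕ (V × V × Fin 2)) :=
  Sum.inr '' {t : V × V × Fin 2 | t.1 ∈ S ∧ t.2.1 ∈ S ∧ G.Adj t.1 t.2.1}

variable (χ) in
/-- The set `X_C`. -/
def cliqueVerts (S : Set V) : Set ((V × Fin k) ⊕ (V × V × Fin 2)) :=
  Sum.inl '' {p : V × Fin k | p.1 ∈ S ∧ p.2 ≠ χ p.1}

variable {S : Set V}

lemma mem_of_adj_gadgetVerts {x v : (V × Fin k) ⊕ (V × V × Fin 2)} (hx : x ∈ gadgetVerts G S)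
    (h : (fromRel (gadgetRel G χ)).Adj x v) : v ∈ gadgetVerts G S ∪ cliqueVerts χ S := by
  obtain ⟨⟨a, b, c⟩, habS, rfl⟩ := hx
  obtain ⟨-, h | h⟩ := (fromRel_adj _ _ _).mp h
  · rcases v with _ | ⟨a', b', c'⟩
    · exact h.elim
    · obtain ⟨-, rfl, rfl⟩ := h
      exact Or.inl ⟨(a, b, c'), habS, rfl⟩
  · rcases v with ⟨i, ℓ⟩ | ⟨a', b', c'⟩
    · obtain ⟨hℓ, -, ⟨-, rfl | rfl⟩ | ⟨-, rfl, -⟩⟩ := h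
      · exact Or.inr ⟨(i, ℓ), ⟨habS.1, hℓ⟩, rfl⟩
      · exact Or.inr ⟨(i, ℓ), ⟨habS.2.1, hℓ⟩, rfl⟩
      · exact Or.inr ⟨(i, ℓ), ⟨habS.1, hℓ⟩, rfl⟩
    · obtain ⟨-, rfl, rfl⟩ := h
      exact Or.inl ⟨(a', b', c'), habS, rfl⟩

lemma isOCC_gadgetVerts_cliqueVerts (hk : 2 ≤ k) (hS : ∀ ℓ, ∃ v ∈ S, χ v = ℓ) :
    IsOCC (fromRel (gadgetRel G χ)) (gadgetVerts G S) (cliqueVerts χ S)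
      (gadgetVerts G S ∪ cliqueVerts χ S)ᶜ := by
  refine ⟨Set.union_compl_self _, ?_, Set.disjoint_compl_right_iff_subset.mpr
    Set.subset_union_left, Set.disjoint_compl_right_iff_subset.mpr Set.subset_union_right,
    colorable_of_hom_gadgetRel (Embedding.induce _).toHom ?_,
    fun x hx v hv h => hv (mem_of_adj_gadgetVerts hx h), ?_⟩
  · rw [Set.disjoint_left]
    rintro _ ⟨t, -, rfl⟩ ⟨p, -, h⟩
    exact Sum.inl_ne_inr h
  · rintro ⟨_, t, -, rfl⟩
    exact ⟨t, rfl⟩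
  · obtain ⟨a, ha, hχa⟩ := hS ⟨0, by omega⟩
    refine ⟨Sum.inl (a, ⟨1, by omega⟩), Or.inr ⟨_, ⟨ha, ?_⟩, rfl⟩⟩
    simp [hχa]

lemma ncard_cliqueVerts (hS : ∀ ℓ, ∃! v, v ∈ S ∧ χ v = ℓ) :
    (cliqueVerts χ S).ncard = k * (k - 1) := by
  have hbij : Set.BijOn (Prod.map χ id) {p : V × Fin k | p.1 ∈ S ∧ p.2 ≠ χ p.1}
      (Finset.univ.offDiag : Finset (Fin k × Fin k)) := by
    refine ⟨fun p hp => by simpa [eq_comm] using hp.2, ?_, ?_⟩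
    · rintro ⟨a, ℓ⟩ ⟨ha, -⟩ ⟨a', ℓ'⟩ ⟨ha', -⟩ h
      simp only [Prod.map, id, Prod.mk.injEq] at h
      obtain ⟨hχ, rfl⟩ := h
      obtain rfl : a = a' := (hS (χ a)).unique ⟨ha, rfl⟩ ⟨ha', hχ.symm⟩
      rfl
    · rintro ⟨m, ℓ⟩ h
      obtain ⟨a, ha, rfl⟩ := (hS m).exists
      exact ⟨(a, ℓ), ⟨ha, by simpa [eq_comm] using h⟩, rfl⟩
  rw [cliqueVerts, Sum.inl_injective.injOn.ncard_image, hbij.ncard_eq, Set.ncard_coe_finset,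
    Finset.offDiag_card, Finset.card_univ, Fintype.card_fin, Nat.mul_sub_one]

lemma gadgetFiber_injOn : Set.InjOn (gadgetFiber χ) (cliqueVerts χ S) := by
  rintro _ ⟨p, -, rfl⟩ _ ⟨q, -, rfl⟩ h
  exact congrArg Sum.inl h

variable (G χ) in
def triangleCertificate (S : Set V) : (fromRel (gadgetRel G χ)).Subgraph :=
  (fromRel (gadgetRel G χ)).fiberSubgraph (cliqueVerts χ S ∪ gadgetVerts G S) (gadgetFiber χ)

lemma ncard_coe_preimage_cliqueVerts :
    {x : ↥(cliqueVerts χ S ∪ gadgetVerts G S) | ↑x ∈ cliqueVerts χ S}.ncard =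
      (cliqueVerts χ S).ncard :=
  Set.ncard_preimage_of_injective_subset_range Subtype.val_injective
    (Subtype.range_coe ▸ Set.subset_union_left)

lemma exists_triangle_triangleCertificate (hclique : ∀ u ∈ S, ∀ v ∈ S, u ≠ v → G.Adj u v)
    (hS : ∀ ℓ, ∃ v ∈ S, χ v = ℓ) {x : (triangleCertificate G χ S).verts}
    (hx : ↑x ∈ cliqueVerts χ S) : ∃ y z, (triangleCertificate G χ S).coe.Adj x y ∧
      (triangleCertificate G χ S).coe.Adj x z ∧ (triangleCertificate G χ S).coe.Adj y z := by
  obtain ⟨x, hxV⟩ := x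
  obtain ⟨⟨a, ℓ⟩, ⟨ha, hℓ⟩, rfl⟩ := hx
  obtain ⟨b, hb, rfl⟩ := hS ℓ
  have hab : G.Adj a b := hclique a ha b hb fun h => hℓ (h ▸ rfl)
  have hxb : ∀ c : Fin 2, Sum.inr (a, b, c) ∈ cliqueVerts χ S ∪ gadgetVerts G S :=
    fun c => Or.inr ⟨(a, b, c), ⟨ha, hb, hab⟩, rfl⟩
  obtain ⟨h0, h1, h01⟩ := gadgetRel_triangle hab hℓ rfl
  exact ⟨⟨_, hxb 0⟩, ⟨_, hxb 1⟩, ⟨h0, hxV, hxb 0, rfl⟩, ⟨h1, hxV, hxb 1, rfl⟩,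
    ⟨h01, hxb 0, hxb 1, rfl⟩⟩

lemma ncard_cliqueVerts_le_of_isOCT [Finite V] (hclique : ∀ u ∈ S, ∀ v ∈ S, u ≠ v → G.Adj u v)
    (hS : ∀ ℓ, ∃ v ∈ S, χ v = ℓ) {T : Set (triangleCertificate G χ S).verts}
    (hT : IsOCT (triangleCertificate G χ S).coe T) : (cliqueVerts χ S).ncard ≤ T.ncard := by
  have hinj : Set.InjOn (gadgetFiber χ ∘ Subtype.val)
      {x : (triangleCertificate G χ S).verts | ↑x ∈ cliqueVerts χ S} :=
    gadgetFiber_injOn.comp Subtype.val_injective.injOn fun _ hx => hx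
  exact (ncard_coe_preimage_cliqueVerts (G := G)).symm.trans_le <|
    hT.ncard_le_of_triangles (fun _ _ h => fiberSubgraph_coe_adj_fiber h) hinj
      fun _ hx => exists_triangle_triangleCertificate hclique hS hx

lemma isOCT_cliqueVerts :
    IsOCT ((fromRel (gadgetRel G χ)).induce (cliqueVerts χ S ∪ gadgetVerts G S))
      {x | ↑x ∈ cliqueVerts χ S} := by
  refine colorable_of_hom_gadgetRel
    ((Embedding.induce _).toHom.comp (Embedding.induce _).toHom) fun ⟨⟨x, hx⟩, hxC⟩ => ?_
  obtain hx | ⟨t, -, rfl⟩ := hx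
  · exact absurd hx hxC
  · exact ⟨t, rfl⟩

lemma oct_induce_cliqueVerts_union_gadgetVerts [Finite V]
    (hclique : ∀ u ∈ S, ∀ v ∈ S, u ≠ v → G.Adj u v) (hS : ∀ ℓ, ∃ v ∈ S, χ v = ℓ) :
    oct ((fromRel (gadgetRel G χ)).induce (cliqueVerts χ S ∪ gadgetVerts G S)) =
      (cliqueVerts χ S).ncard := by
  rw [oct_eq_ncard isOCT_cliqueVerts, ncard_coe_preimage_cliqueVerts]
  intro T hT
  rw [ncard_coe_preimage_cliqueVerts]
  exact ncard_cliqueVerts_le_of_isOCT hclique hS (hT.mono fiberSubgraph_coe_le_induce)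

lemma isCert_triangleCertificate [Finite V] (hclique : ∀ u ∈ S, ∀ v ∈ S, u ≠ v → G.Adj u v)
    (hS : ∀ ℓ, ∃ v ∈ S, χ v = ℓ) :
    IsCert (fromRel (gadgetRel G χ)) (triangleCertificate G χ S) (cliqueVerts χ S) 1 := by
  refine ⟨Set.subset_union_left, isOCT_cliqueVerts.mono fiberSubgraph_coe_le_induce,
    fun T hT => ncard_cliqueVerts_le_of_isOCT hclique hS hT, fun v => ?_⟩
  rw [Set.ncard_le_one_iff]
  intro x y hx hy
  exact Subtype.ext <| gadgetFiber_injOn hx.2 hy.2 <|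
    (fiberSubgraph_reachable_fiber hx.1).trans (fiberSubgraph_reachable_fiber hy.1).symm

end Gadget

theorem multicolored_clique_gives_tight_occ_general {V : Type} [Fintype V]
    {k : ℕ} (hk : 2 ≤ k)
    (G : SimpleGraph V) (χ : V → Fin k)
    (S : Set V)
    (hclique : ∀ u ∈ S, ∀ v ∈ S, u ≠ v → G.Adj u v)
    (hmc : ∀ ℓ : Fin k, ∃! v : V, v ∈ S ∧ χ v = ℓ) :
    IsZTightOCC (SimpleGraph.fromRel (gadgetRel G χ))
      (Sum.inr '' {t : V × V × Fin 2 | t.1 ∈ S ∧ t.2.1 ∈ S ∧ G.Adj t.1 t.2.1})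
      (Sum.inl '' {p : V × Fin k | p.1 ∈ S ∧ p.2 ≠ χ p.1})
      ((Sum.inr '' {t : V × V × Fin 2 | t.1 ∈ S ∧ t.2.1 ∈ S ∧ G.Adj t.1 t.2.1} ∪
        Sum.inl '' {p : V × Fin k | p.1 ∈ S ∧ p.2 ≠ χ p.1})ᶜ) 1 ∧
    (Sum.inl '' {p : V × Fin k | p.1 ∈ S ∧ p.2 ≠ χ p.1} :
      Set ((V × Fin k) ⊕ (V × V × Fin 2))).ncard = k * (k - 1) := by
  have hS : ∀ ℓ, ∃ v ∈ S, χ v = ℓ := fun ℓ => (hmc ℓ).exists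
  exact ⟨⟨isOCC_gadgetVerts_cliqueVerts hk hS,
    (oct_induce_cliqueVerts_union_gadgetVerts hclique hS).symm,
    triangleCertificate G χ S, subset_rfl, isCert_triangleCertificate hclique hS⟩,
    ncard_cliqueVerts hmc⟩

/-- **Forward direction of the W[1]-hardness reduction.** If `G` (properly colored by
`χ : V → Fin k`) has a multicolored clique `S` of size `k`, then in the constructed
graph `G' = fromRel (gadgetRel G χ)` the sets
`X_B = {x_{ij}, x'_{ij}, y_{ij}, y'_{ij} : i, j ∈ S}`, `X_C = ⋃_{i ∈ S} U_i` and the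
remaining vertices `X_R` form a `1`-tight odd cycle cut of width `k(k−1)`. -/
theorem multicolored_clique_gives_tight_occ {V : Type} [Fintype V] [DecidableEq V]
    {k : ℕ} (hk : 2 ≤ k)
    (G : SimpleGraph V) (χ : V → Fin k)
    (hχ : ∀ u v : V, G.Adj u v → χ u ≠ χ v)
    (S : Set V)
    (hclique : ∀ u ∈ S, ∀ v ∈ S, u ≠ v → G.Adj u v)
    (hmc : ∀ ℓ : Fin k, ∃! v : V, v ∈ S ∧ χ v = ℓ) :
    IsZTightOCC (SimpleGraph.fromRel (gadgetRel G χ))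
      (Sum.inr '' {t : V × V × Fin 2 | t.1 ∈ S ∧ t.2.1 ∈ S ∧ G.Adj t.1 t.2.1})
      (Sum.inl '' {p : V × Fin k | p.1 ∈ S ∧ p.2 ≠ χ p.1})
      ((Sum.inr '' {t : V × V × Fin 2 | t.1 ∈ S ∧ t.2.1 ∈ S ∧ G.Adj t.1 t.2.1} ∪
        Sum.inl '' {p : V × Fin k | p.1 ∈ S ∧ p.2 ≠ χ p.1})ᶜ) 1 ∧
    (Sum.inl '' {p : V × Fin k | p.1 ∈ S ∧ p.2 ≠ χ p.1} :
      Set ((V × Fin k) ⊕ (V × V × Fin 2))).ncard = k * (k - 1) :=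
  multicolored_clique_gives_tight_occ_general hk G χ S hclique hmc
end
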